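/- arXiv:2002.04491 — 2 statements merged into one kernel-verified Lean document; each statement's English description precedes it below -/
import Mathlib

section
/- Let G ⊆ K{X}° be a set such that for every N ≥ 0 the reductions ρ(G_{≤N}) form a Gröbner basis of Ī_N in k[X], where G_{≤N} = {g ∈ G : val(g) ≤ N}. Then G is a Gröbner basis of I with respect to the valuation-first term order on K{X}°. -/
open MvPowerSeries

namespace TateStmt

variable {n : ℕ} {O : Type*} [CommRing O]

/-- The Tate condition: the (π-adic) valuations of the coefficients tend to infinity. -/
def IsTate (π : O) (f : MvPowerSeries (Fin n) O) : Prop :=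
  ∀ N : ℕ, {i : Fin n →₀ ℕ | ¬ π ^ N ∣ MvPowerSeries.coeff i f}.Finite

/-- The integral Tate algebra `K{X}°`, as a subring of the ring of formal power series
over the valuation ring `O = K°`. -/
def TateAlgebra (n : ℕ) (O : Type*) [CommRing O] (π : O) :
    Subring (MvPowerSeries (Fin n) O) where
  carrier := {f | IsTate π f}
  zero_mem' := by
    intro N
    apply Set.Finite.subset (Set.finite_empty)
    intro i hi
    exact hi (Dvd.intro 0 (by simp))
  one_mem' := by
    intro N
    apply Set.Finite.subset (Set.finite_singleton (0 : Fin n →₀ ℕ))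
    intro i hi
    by_contra h
    rw [Set.mem_singleton_iff] at h
    apply hi
    rw [MvPowerSeries.coeff_one, if_neg h]
    exact Dvd.intro 0 (by simp)
  add_mem' := by
    intro f g hf hg N
    apply Set.Finite.subset ((hf N).union (hg N))
    intro i hi
    by_contra h
    simp only [Set.mem_union, Set.mem_setOf_eq, not_or, not_not] at h
    exact hi (by rw [map_add]; exact dvd_add h.1 h.2)
  neg_mem' := by
    intro f hf N
    apply Set.Finite.subset (hf N)
    intro i hi
    by_contra h
    simp only [Set.mem_setOf_eq, not_not] at h
    exact hi (by rw [map_neg]; exact (dvd_neg).mpr h)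
  mul_mem' := by
    intro f g hf hg N
    apply Set.Finite.subset (Set.Finite.add (hf N) (hg N))
    intro i hi
    by_contra h
    apply hi
    rw [MvPowerSeries.coeff_mul]
    apply Finset.dvd_sum
    intro p hp
    rw [Finset.HasAntidiagonal.mem_antidiagonal] at hp
    by_cases h1 : π ^ N ∣ MvPowerSeries.coeff p.1 f
    · exact Dvd.dvd.mul_right h1 _
    · by_cases h2 : π ^ N ∣ MvPowerSeries.coeff p.2 g
      · exact Dvd.dvd.mul_left h2 _
      · exact absurd (hp ▸ Set.add_mem_add h1 h2) h

/-- Tate monomials `π^a X^i`, identified with pairs `(a, i) ∈ ℕ × ℕ^n`. -/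
abbrev TMon (n : ℕ) := ℕ × (Fin n →₀ ℕ)

noncomputable def monMul (a b : TMon n) : TMon n := (a.1 + b.1, a.2 + b.2)
def monDvd (a b : TMon n) : Prop := a.1 ≤ b.1 ∧ a.2 ≤ b.2
noncomputable def monDiv (a b : TMon n) : TMon n := (a.1 - b.1, a.2 - b.2)
noncomputable def monLcm (a b : TMon n) : TMon n := (max a.1 b.1, a.2 ⊔ b.2)

/-- The valuation-first term order: compare valuations first (a *smaller* valuation gives a
*larger* term), then exponents via the monomial order `mo`. -/
def termLT (mo : MonomialOrder (Fin n)) (a b : TMon n) : Prop :=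
  b.1 < a.1 ∨ (a.1 = b.1 ∧ mo.toSyn a.2 < mo.toSyn b.2)

def termLE (mo : MonomialOrder (Fin n)) (a b : TMon n) : Prop :=
  a = b ∨ termLT mo a b

/-- Order on `Option (TMon n)`, where `none` (the "monomial" of `0`) is smallest. -/
def optLT (mo : MonomialOrder (Fin n)) : Option (TMon n) → Option (TMon n) → Prop
  | none, none => False
  | none, some _ => True
  | some _, none => False
  | some a, some b => termLT mo a b

def optLE (mo : MonomialOrder (Fin n)) (a b : Option (TMon n)) : Prop :=
  a = b ∨ optLT mo a b

noncomputable def optMul (t : TMon n) : Option (TMon n) → Option (TMon n)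
  | none => none
  | some a => some (monMul t a)

/-- `(a, i)` is (the monomial of) a term of `f`: the coefficient of `X^i` has valuation
exactly `a`. -/
def IsTerm (π : O) (f : MvPowerSeries (Fin n) O) (m : TMon n) : Prop :=
  π ^ m.1 ∣ MvPowerSeries.coeff m.2 f ∧ ¬ π ^ (m.1 + 1) ∣ MvPowerSeries.coeff m.2 f

/-- `m` is the leading monomial of `f`. -/
def IsLM (π : O) (mo : MonomialOrder (Fin n)) (f : MvPowerSeries (Fin n) O) (m : TMon n) :
    Prop :=
  IsTerm π f m ∧ ∀ m', IsTerm π f m' → termLE mo m' m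

/-- `s` is the leading monomial of `f`, with the convention `LM 0 = none`. -/
def IsLMopt (π : O) (mo : MonomialOrder (Fin n)) (f : MvPowerSeries (Fin n) O) :
    Option (TMon n) → Prop
  | none => f = 0
  | some m => IsLM π mo f m

/-- All coefficients of `f` are divisible by `π^N`, i.e. `val f ≥ N`. -/
def DvdAll (π : O) (N : ℕ) (f : MvPowerSeries (Fin n) O) : Prop :=
  ∀ i, π ^ N ∣ MvPowerSeries.coeff i f

/-- The Gauss valuation of `f` is exactly `N`. -/
def ValEq (π : O) (f : MvPowerSeries (Fin n) O) (N : ℕ) : Prop :=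
  DvdAll π N f ∧ ¬ DvdAll π (N + 1) f

/-- `G` is a Gröbner basis of the ideal `I` of the (integral) Tate algebra. -/
def IsGB (π : O) (mo : MonomialOrder (Fin n)) (G : Set (TateAlgebra n O π))
    (I : Ideal (TateAlgebra n O π)) : Prop :=
  (∀ g ∈ G, g ∈ I) ∧
    ∀ f ∈ I, (f : MvPowerSeries (Fin n) O) ≠ 0 → ∀ mf,
      IsLM π mo (f : MvPowerSeries (Fin n) O) mf →
        ∃ g ∈ G, ∃ mg, IsLM π mo (g : MvPowerSeries (Fin n) O) mg ∧ monDvd mg mf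

/-- The module `M = {(u,v) : u f - v ∈ I₀}`. -/
def SigMod {π : O} (I0 : Ideal (TateAlgebra n O π)) (f : TateAlgebra n O π) :
    Set (TateAlgebra n O π × TateAlgebra n O π) :=
  {p | p.1 * f - p.2 ∈ I0}

/-- `p = (u₁,v₁)` is top-reducible by `q = (u₂,v₂)`. -/
def TopRed (π : O) (mo : MonomialOrder (Fin n))
    (p q : TateAlgebra n O π × TateAlgebra n O π) : Prop :=
  (q.2 = 0 ∧ ∃ mu mq, IsLM π mo (p.1 : MvPowerSeries (Fin n) O) mu ∧
      IsLM π mo (q.1 : MvPowerSeries (Fin n) O) mq ∧ monDvd mq mu)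
  ∨ (p.2 ≠ 0 ∧ q.2 ≠ 0 ∧
      ∃ m1 m2, IsLM π mo (p.2 : MvPowerSeries (Fin n) O) m1 ∧
        IsLM π mo (q.2 : MvPowerSeries (Fin n) O) m2 ∧ monDvd m2 m1 ∧
        ∃ s1 s2, IsLMopt π mo (p.1 : MvPowerSeries (Fin n) O) s1 ∧
          IsLMopt π mo (q.1 : MvPowerSeries (Fin n) O) s2 ∧
          optLE mo (optMul (monDiv m1 m2) s2) s1)

/-- `G` is a strong Gröbner basis of the module `M = SigMod I0 f`. -/
def IsSGB (π : O) (mo : MonomialOrder (Fin n)) (I0 : Ideal (TateAlgebra n O π))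
    (f : TateAlgebra n O π) (G : Set (TateAlgebra n O π × TateAlgebra n O π)) : Prop :=
  G.Finite ∧ G ⊆ SigMod I0 f ∧
    ∀ p ∈ SigMod I0 f, p ≠ 0 → ∃ q ∈ G, TopRed π mo p q

/-- `p` is covered by `q`. -/
def Covers (π : O) (mo : MonomialOrder (Fin n))
    (q p : TateAlgebra n O π × TateAlgebra n O π) : Prop :=
  ∃ mu mq, IsLM π mo (p.1 : MvPowerSeries (Fin n) O) mu ∧
    IsLM π mo (q.1 : MvPowerSeries (Fin n) O) mq ∧ monDvd mq mu ∧
    ∃ sv sp, IsLMopt π mo (q.2 : MvPowerSeries (Fin n) O) sv ∧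
      IsLMopt π mo (p.2 : MvPowerSeries (Fin n) O) sp ∧
      optLT mo (optMul (monDiv mu mq) sv) sp

def CoveredBy (π : O) (mo : MonomialOrder (Fin n))
    (p : TateAlgebra n O π × TateAlgebra n O π)
    (G : Set (TateAlgebra n O π × TateAlgebra n O π)) : Prop :=
  ∃ q ∈ G, Covers π mo q p

/-- The Tate series `π^a X^i`, as an element of the Tate algebra. -/
noncomputable def monTA (π : O) (m : TMon n) : TateAlgebra n O π :=
  ⟨MvPowerSeries.monomial m.2 (π ^ m.1), by
    intro N
    apply Set.Finite.subset (Set.finite_singleton m.2)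
    intro i hi
    by_contra h
    rw [Set.mem_singleton_iff] at h
    apply hi
    rw [MvPowerSeries.coeff_monomial, if_neg h]
    exact Dvd.intro 0 (by simp)⟩

noncomputable def smulPair (π : O) (m : TMon n) (p : TateAlgebra n O π × TateAlgebra n O π) :
    TateAlgebra n O π × TateAlgebra n O π :=
  (monTA π m * p.1, monTA π m * p.2)

/-- `r` is the J-pair of `(p, q)` (with `p` carrying the larger signature part). -/
def IsJPair (π : O) (mo : MonomialOrder (Fin n))
    (p q r : TateAlgebra n O π × TateAlgebra n O π) : Prop :=
  ∃ m1 m2, IsLM π mo (p.2 : MvPowerSeries (Fin n) O) m1 ∧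
    IsLM π mo (q.2 : MvPowerSeries (Fin n) O) m2 ∧
    (∃ s1 s2, IsLMopt π mo (p.1 : MvPowerSeries (Fin n) O) s1 ∧
      IsLMopt π mo (q.1 : MvPowerSeries (Fin n) O) s2 ∧
      optLT mo (optMul (monDiv (monLcm m1 m2) m2) s2)
        (optMul (monDiv (monLcm m1 m2) m1) s1)) ∧
    r = smulPair π (monDiv (monLcm m1 m2) m1) p

section Residue

variable {k : Type*} [Field k]

/-- `P = ρ(f)`, the reduction mod `π` of `π^{-val f} f`. -/
def IsRho (π : O) (φ : O →+* k) (f : MvPowerSeries (Fin n) O)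
    (P : MvPolynomial (Fin n) k) : Prop :=
  ∃ (N : ℕ) (g : MvPowerSeries (Fin n) O), f = (π ^ N) • g ∧
    (∃ i, ¬ π ∣ MvPowerSeries.coeff i g) ∧
    ∀ i, MvPolynomial.coeff i P = φ (MvPowerSeries.coeff i g)

def rhoSet (π : O) (φ : O →+* k) (S : Set (TateAlgebra n O π)) :
    Set (MvPolynomial (Fin n) k) :=
  {P | ∃ f ∈ S, IsRho π φ (f : MvPowerSeries (Fin n) O) P}

/-- `Ī_N`: the image in `k[X]` of `π^{-N} (I ∩ π^N K{X}°)`. -/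
def BarIdeal (π : O) (φ : O →+* k) (I : Ideal (TateAlgebra n O π)) (N : ℕ) :
    Set (MvPolynomial (Fin n) k) :=
  {P | ∃ f ∈ I, ∃ g : MvPowerSeries (Fin n) O, (f : MvPowerSeries (Fin n) O) = (π ^ N) • g ∧
    ∀ i, MvPolynomial.coeff i P = φ (MvPowerSeries.coeff i g)}

/-- `d` is the leading exponent of the polynomial `P` for the monomial order `mo`. -/
def IsPolyLM (mo : MonomialOrder (Fin n)) (P : MvPolynomial (Fin n) k)
    (d : Fin n →₀ ℕ) : Prop :=
  MvPolynomial.coeff d P ≠ 0 ∧ ∀ e, MvPolynomial.coeff e P ≠ 0 → mo.toSyn e ≤ mo.toSyn d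

/-- `G` is a Gröbner basis of the set (ideal) `J` of polynomials over the residue field. -/
def IsPolyGB (mo : MonomialOrder (Fin n)) (G : Set (MvPolynomial (Fin n) k))
    (J : Set (MvPolynomial (Fin n) k)) : Prop :=
  G ⊆ J ∧ ∀ P ∈ J, P ≠ 0 → ∀ d, IsPolyLM mo P d →
    ∃ Q ∈ G, ∃ e, IsPolyLM mo Q e ∧ e ≤ d

end Residue

end TateStmt

/-!
If `π^a X^i` is the leading monomial of `f ∈ I`, then every coefficient of `f` has valuation
at least `a`, so `f = π^a g` and `ρ(f)`, the reduction of `g`, lies in `Ī_a` with leading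
exponent `i`. For a series `π^N h` the leading monomial for the valuation-first order is
`π^N X^e` with `X^e` the leading monomial of the reduction of `h`. Applied to the element
`g₀ = π^N h ∈ G` with `N ≤ val g₀ ≤ a` that the Gröbner basis of `Ī_a` provides, this gives a
leading monomial `π^N X^e` dividing `π^a X^i`.
-/

theorem pow_succ_dvd_pow_mul_iff {M : Type*} [CommMonoidWithZero M] [IsCancelMulZero M]
    {π c : M} (hπ : π ≠ 0) {N : ℕ} : π ^ (N + 1) ∣ π ^ N * c ↔ π ∣ c := by
  rw [pow_succ, mul_dvd_mul_iff_left (pow_ne_zero N hπ)]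

namespace TateStmt

variable {n : ℕ} {O : Type*} [CommRing O] {π : O} {f : MvPowerSeries (Fin n) O}

theorem DvdAll.exists_eq_smul {N : ℕ} (h : DvdAll π N f) :
    ∃ g : MvPowerSeries (Fin n) O, f = π ^ N • g :=
  ⟨fun i => (h i).choose, by ext i; exact (h i).choose_spec⟩

theorem dvdAll_pow_smul (N : ℕ) (g : MvPowerSeries (Fin n) O) : DvdAll π N (π ^ N • g) :=
  fun i => by rw [coeff_smul]; exact dvd_mul_right _ _

theorem DvdAll.le_of_valEq {N M : ℕ} (h : DvdAll π N f) (hf : ValEq π f M) : N ≤ M := by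
  by_contra! hMN
  exact hf.2 fun i => (pow_dvd_pow π hMN).trans (h i)

theorem IsTerm.le_of_dvdAll {N b : ℕ} {j : Fin n →₀ ℕ} (hN : DvdAll π N f)
    (hb : IsTerm π f (b, j)) : N ≤ b := by
  by_contra! hbN
  exact hb.2 ((pow_dvd_pow π hbN).trans (hN j))

variable [IsDomain O]

theorem isTerm_pow_smul_iff (hπ : π ≠ 0) {N : ℕ} {g : MvPowerSeries (Fin n) O}
    {j : Fin n →₀ ℕ} : IsTerm π (π ^ N • g) (N, j) ↔ ¬ π ∣ coeff j g := by
  simp only [IsTerm, coeff_smul, pow_succ_dvd_pow_mul_iff hπ, dvd_mul_right, true_and]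

theorem exists_isTerm [WfDvdMonoid O] (hπ : Irreducible π) {j : Fin n →₀ ℕ}
    (hj : coeff j f ≠ 0) : ∃ b, IsTerm π f (b, j) := by
  obtain ⟨c, hc, hπc⟩ :=
    (FiniteMultiplicity.of_not_isUnit hπ.not_isUnit hj).exists_eq_pow_mul_and_not_dvd
  generalize multiplicity π (coeff j f) = b at hc
  refine ⟨b, ?_, ?_⟩ <;> rw [hc]
  · exact dvd_mul_right _ _
  · exact (pow_succ_dvd_pow_mul_iff hπ.ne_zero).not.2 hπc

theorem IsLM.dvdAll [WfDvdMonoid O] (hπ : Irreducible π) {mo : MonomialOrder (Fin n)}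
    {m : TMon n} (hf : IsLM π mo f m) : DvdAll π m.1 f := by
  intro j
  by_cases hj : coeff j f = 0
  · rw [hj]; exact dvd_zero _
  obtain ⟨b, hb⟩ := exists_isTerm hπ hj
  rcases hf.2 _ hb with h | h | h
  · rw [← h]; exact hb.1
  · exact (pow_dvd_pow π h.le).trans hb.1
  · rw [← h.1]; exact hb.1

variable {k : Type*} [Field k] {φ : O →+* k}

theorem exists_coeff_eq_map_of_isTate (hπ : π ≠ 0) (hφ : ∀ c, φ c = 0 ↔ π ∣ c)
    (hf : IsTate π f) {N : ℕ} {g : MvPowerSeries (Fin n) O} (hfg : f = π ^ N • g) :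
    ∃ P : MvPolynomial (Fin n) k, ∀ i, P.coeff i = φ (coeff i g) := by
  have hfin : (Function.support fun i => φ (coeff i g)).Finite :=
    (hf (N + 1)).subset fun i hi => by
      simpa [hfg, coeff_smul, pow_succ_dvd_pow_mul_iff hπ, hφ] using hi
  exact ⟨.ofCoeff (Finsupp.ofSupportFinite _ hfin), fun i => rfl⟩

theorem isLM_pow_smul_iff (hπ : π ≠ 0) (hφ : ∀ c, φ c = 0 ↔ π ∣ c)
    {mo : MonomialOrder (Fin n)} {g : MvPowerSeries (Fin n) O} {P : MvPolynomial (Fin n) k}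
    (hP : ∀ i, P.coeff i = φ (coeff i g)) {N : ℕ} {e : Fin n →₀ ℕ} :
    IsLM π mo (π ^ N • g) (N, e) ↔ IsPolyLM mo P e := by
  have hterm : ∀ j, IsTerm π (π ^ N • g) (N, j) ↔ P.coeff j ≠ 0 := fun j => by
    rw [isTerm_pow_smul_iff hπ, hP, ne_eq, hφ]
  constructor
  · rintro ⟨he, hmax⟩
    refine ⟨(hterm e).1 he, fun j hj => ?_⟩
    rcases hmax _ ((hterm j).2 hj) with h | h | h
    · rw [(Prod.mk.inj h).2]
    · exact absurd h (lt_irrefl N)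
    · exact h.2.le
  · rintro ⟨he, hmax⟩
    refine ⟨(hterm e).2 he, fun ⟨b, j⟩ hb => ?_⟩
    rcases (hb.le_of_dvdAll (dvdAll_pow_smul N g)).lt_or_eq with h | rfl
    · exact Or.inr (Or.inl h)
    rcases (hmax j ((hterm j).1 hb)).lt_or_eq with h | h
    · exact Or.inr (Or.inr ⟨rfl, h⟩)
    · exact Or.inl (by rw [mo.toSyn.injective h])

end TateStmt

open TateStmt MvPowerSeries

variable {n : ℕ} {O k : Type*} [CommRing O] [IsDomain O] [IsDiscreteValuationRing O] [Field k]

theorem statement_15_general (π : O) (hπ : Irreducible π) (mo : MonomialOrder (Fin n))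
    (φ : O →+* k)
    (hker : RingHom.ker φ = Ideal.span {π})
    (I : Ideal (TateAlgebra n O π)) (G : Set (TateAlgebra n O π))
    (hGI : ∀ g ∈ G, g ∈ I)
    (hGB : ∀ N : ℕ, IsPolyGB mo
      (rhoSet π φ {g ∈ G | ∃ M ≤ N, ValEq π (g : MvPowerSeries (Fin n) O) M})
      (BarIdeal π φ I N)) :
    IsGB π mo G I := by
  have hφ : ∀ c, φ c = 0 ↔ π ∣ c := fun c => by
    rw [← RingHom.mem_ker, hker, Ideal.mem_span_singleton]
  refine ⟨hGI, fun f hfI _ ⟨a, i⟩ hfLM => ?_⟩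
  obtain ⟨g, hfg⟩ := (hfLM.dvdAll hπ).exists_eq_smul
  obtain ⟨P, hP⟩ := exists_coeff_eq_map_of_isTate hπ.ne_zero hφ f.2 hfg
  have hPLM : IsPolyLM mo P i := (isLM_pow_smul_iff hπ.ne_zero hφ hP).1 (hfg ▸ hfLM)
  obtain ⟨Q, ⟨g₀, ⟨hg₀G, M, hMa, hg₀M⟩, N, h, hg₀h, -, hQ⟩, e, hQLM, hei⟩ :=
    (hGB a).2 P ⟨f, hfI, g, hfg, hP⟩ (fun h0 => hPLM.1 (by simp [h0])) i hPLM
  refine ⟨g₀, hg₀G, (N, e), hg₀h ▸ (isLM_pow_smul_iff hπ.ne_zero hφ hQ).2 hQLM, ?_, hei⟩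
  exact ((dvdAll_pow_smul N h).le_of_valEq (hg₀h ▸ hg₀M)).trans hMa

/-- if `G ⊆ I ⊆ K{X}°` is such that for every `N ≥ 0` the reductions
`ρ(G_{≤N})` of the elements of `G` of valuation at most `N` form a Gröbner basis of `Ī_N`
in `k[X]`, then `G` is a Gröbner basis of `I` for the valuation-first term order. -/
theorem statement_15 (π : O) (hπ : Irreducible π) (mo : MonomialOrder (Fin n))
    (φ : O →+* k) (hsurj : Function.Surjective φ)
    (hker : RingHom.ker φ = Ideal.span {π})
    (I : Ideal (TateAlgebra n O π)) (G : Set (TateAlgebra n O π))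
    (hGI : ∀ g ∈ G, g ∈ I)
    (hGB : ∀ N : ℕ, IsPolyGB mo
      (rhoSet π φ {g ∈ G | ∃ M ≤ N, ValEq π (g : MvPowerSeries (Fin n) O) M})
      (BarIdeal π φ I N)) :
    IsGB π mo G I :=
  statement_15_general π hπ mo φ hker I G hGI hGB
end

section
/- In the setting of Proposition (VaPoTe invariants): if (b) holds at level N, i.e. φ_N(S_N) ⊆ ⟨π·ν(Q_{≤N}), π^{-N} Q_{>N}⟩, and (c) holds at level N-1, then I_{N+1} = ⟨π^{N+1}·ν(Q_{≤N+1}), Q_{>N+1}⟩. -/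
open MvPowerSeries

open TateStmt MvPowerSeries

variable {n : ℕ} {O : Type*} [CommRing O] [IsDomain O] [IsDiscreteValuationRing O]

/-- `Q_{≤N}`: the elements of `Q_all` of valuation at most `N`. -/
def Qle (π : O) (Qall : Set (TateAlgebra n O π)) (N : ℕ) : Set (TateAlgebra n O π) :=
  {f ∈ Qall | ∃ M ≤ N, ValEq π (f : MvPowerSeries (Fin n) O) M}

/-- `Q_{>N}`: the elements of `Q_all` of valuation greater than `N`. -/
def Qgt (π : O) (Qall : Set (TateAlgebra n O π)) (N : ℕ) : Set (TateAlgebra n O π) :=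
  {f ∈ Qall | ¬ ∃ M ≤ N, ValEq π (f : MvPowerSeries (Fin n) O) M}

/-- The set `π^a · S` for `S` a set of Tate series. -/
noncomputable def piPowMulSet (π : O) (a : ℕ) (S : Set (TateAlgebra n O π)) :
    Set (TateAlgebra n O π) :=
  (fun g => monTA π (a, 0) * g) '' S

/-- The set `π^{-N} · S` (those `g` with `π^N g ∈ S`). -/
def piPowDivSet (π : O) (N : ℕ) (S : Set (TateAlgebra n O π)) :
    Set (TateAlgebra n O π) :=
  {g | ∃ f ∈ S, (f : MvPowerSeries (Fin n) O) =
    (π ^ N) • (g : MvPowerSeries (Fin n) O)}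

/-! The easy inclusion holds because every generator of `⟨π^{N+1} ν(Q_{≤N+1}), Q_{>N+1}⟩` lies
in `I` and has valuation at least `N + 1`. Conversely, by (c) an element `x ∈ I_{N+1}` can be
written `x = π^N y + z` with `y ∈ ⟨ν(Q_{≤N})⟩` and `z ∈ ⟨Q_{>N}⟩`. Every element of `Q_{>N}` has
valuation `≥ N + 1`, so it is either `π^{N+1} ν(f)` with `f ∈ Q_{≤N+1}` or lies in `Q_{>N+1}`;
thus `z` is in the target ideal, and `π^N y = x - z` has valuation `≥ N + 1`. Cancelling `π^N`,
`y ≡ 0 mod π`, and (b) puts `y` in `⟨π ν(Q_{≤N}), π^{-N} Q_{>N}⟩`, which `π^N` maps into the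
target ideal. -/

theorem exists_finset_sum_mul_eq_of_mem_span_image {R α : Type*} [CommRing R] {v : α → R}
    {s : Set α} {y : R} (hy : y ∈ Ideal.span (v '' s)) :
    ∃ t : Finset α, ↑t ⊆ s ∧ ∃ a : α → R, ∑ f ∈ t, a f * v f = y := by
  obtain ⟨l, hl, rfl⟩ := (Finsupp.mem_span_image_iff_linearCombination R).mp hy
  exact ⟨l.support, hl, l, rfl⟩

theorem mul_mem_of_mem_span_mul_image {R : Type*} [CommRing R] {c : R} {A : Set R}
    {J : Ideal R} (hAJ : (c * ·) '' A ⊆ J) {y : R} (hy : y ∈ Ideal.span A) : c * y ∈ J := by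
  have : Ideal.span A ≤ J.colon {c} := Ideal.span_le.mpr fun a ha => by
    simpa [mul_comm] using hAJ ⟨a, ha, rfl⟩
  simpa [mul_comm] using this hy

theorem mem_of_mem_span_mul_image_union {R : Type*} [CommRing R] {c : R} {A B : Set R}
    {D J : Ideal R} (hBD : B ⊆ D) (hBJ : B ⊆ J)
    (hA : ∀ y ∈ Ideal.span A, c * y ∈ D → c * y ∈ J)
    {x : R} (hx : x ∈ Ideal.span ((c * ·) '' A ∪ B)) (hxD : x ∈ D) : x ∈ J := by
  rw [Ideal.span_union] at hx
  obtain ⟨_, hcy, z, hz, rfl⟩ := Submodule.mem_sup.mp hx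
  obtain ⟨y, hy, rfl⟩ := (Submodule.span_image (LinearMap.mulLeft R c)).le hcy
  have hzD : z ∈ D := Ideal.span_le.mpr hBD hz
  have hcyD : c * y ∈ D := by simpa using D.sub_mem hxD hzD
  exact J.add_mem (hA y hy hcyD) (Ideal.span_le.mpr hBJ hz)

section TateAlgebra

variable {R : Type*} [CommRing R] {π : R}

theorem coe_monTA_mul (a : ℕ) (x : TateAlgebra n R π) :
    ((monTA π (a, 0) * x : TateAlgebra n R π) : MvPowerSeries (Fin n) R) =
      π ^ a • (x : MvPowerSeries (Fin n) R) := by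
  rw [smul_eq_C_mul, ← monomial_zero_eq_C_apply]
  rfl

theorem monTA_mul_monTA (a b : ℕ) :
    (monTA π (a, 0) * monTA π (b, 0) : TateAlgebra n R π) = monTA π (a + b, 0) := by
  apply Subtype.ext
  rw [coe_monTA_mul]
  show π ^ a • monomial (0 : Fin n →₀ ℕ) (π ^ b) = monomial 0 (π ^ (a + b))
  rw [← map_smul, smul_eq_mul, ← pow_add]

theorem TateStmt.DvdAll.of_le {a b : ℕ} {f : MvPowerSeries (Fin n) R} (hab : a ≤ b)
    (hf : DvdAll π b f) : DvdAll π a f :=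
  fun i => (pow_dvd_pow π hab).trans (hf i)

theorem TateStmt.ValEq.unique {f : MvPowerSeries (Fin n) R} {a b : ℕ} (ha : ValEq π f a)
    (hb : ValEq π f b) : a = b := by
  refine le_antisymm ?_ ?_ <;> by_contra! h
  · exact hb.2 (ha.1.of_le h)
  · exact ha.2 (hb.1.of_le h)

theorem TateStmt.ValEq.ne_zero {f : MvPowerSeries (Fin n) R} {a : ℕ} (ha : ValEq π f a) :
    f ≠ 0 :=
  fun hf => ha.2 fun i => by simp [hf]

theorem dvdAll_of_dvdAll_pow_smul [IsDomain R] (hπ : π ≠ 0) {a b : ℕ}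
    {f : MvPowerSeries (Fin n) R} (h : DvdAll π (a + b) (π ^ a • f)) : DvdAll π b f := by
  intro i
  have hi := h i
  rw [coeff_smul, pow_add] at hi
  exact (mul_dvd_mul_iff_left (pow_ne_zero a hπ)).mp hi

variable (π) in
def dvdAllIdeal (a : ℕ) : Ideal (TateAlgebra n R π) where
  carrier := {x | DvdAll π a (x : MvPowerSeries (Fin n) R)}
  zero_mem' := by intro i; simp
  add_mem' := by
    intro x y hx hy i
    rw [Subring.coe_add, map_add]
    exact dvd_add (hx i) (hy i)
  smul_mem' := by
    intro c x hx i
    show π ^ a ∣ coeff i ((c : MvPowerSeries (Fin n) R) * (x : MvPowerSeries (Fin n) R))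
    rw [coeff_mul]
    exact Finset.dvd_sum fun p _ => (hx p.2).mul_left _

theorem mem_dvdAllIdeal {a : ℕ} {x : TateAlgebra n R π} :
    x ∈ dvdAllIdeal π a ↔ DvdAll π a (x : MvPowerSeries (Fin n) R) :=
  Iff.rfl

theorem monTA_mul_mem_dvdAllIdeal (a : ℕ) (x : TateAlgebra n R π) :
    monTA π (a, 0) * x ∈ dvdAllIdeal π a := by
  intro i
  rw [coe_monTA_mul, coeff_smul]
  exact dvd_mul_right _ _

theorem monTA_mul_mem_span_of_mem_span_piPowMulSet_union_piPowDivSet {a N : ℕ}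
    {S T : Set (TateAlgebra n R π)} {y : TateAlgebra n R π}
    (hy : y ∈ Ideal.span (piPowMulSet π a S ∪ piPowDivSet π N T)) :
    monTA π (N, 0) * y ∈ Ideal.span (piPowMulSet π (N + a) S ∪ T) := by
  refine mul_mem_of_mem_span_mul_image ?_ hy
  rintro _ ⟨_, ⟨s, hs, rfl⟩ | ⟨g, hg, hgz⟩, rfl⟩ <;> dsimp only
  · rw [← mul_assoc, monTA_mul_monTA]
    exact Ideal.subset_span (Or.inl ⟨s, hs, rfl⟩)
  · rw [Subtype.ext ((coe_monTA_mul N _).trans hgz.symm)]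
    exact Ideal.subset_span (Or.inr hg)

variable {Qall : Set (TateAlgebra n R π)} {nu : TateAlgebra n R π → TateAlgebra n R π}

variable (π Qall nu) in
/-- `nu` is the paper's `ν(f) = π^{-val f} f` on `Q_all`. -/
def IsNormalization : Prop :=
  ∀ f ∈ Qall, f ≠ 0 → ∃ N : ℕ, ValEq π (f : MvPowerSeries (Fin n) R) N ∧
    (f : MvPowerSeries (Fin n) R) = π ^ N • (nu f : MvPowerSeries (Fin n) R)

theorem Qle_mono {M N : ℕ} (h : M ≤ N) : Qle π Qall M ⊆ Qle π Qall N :=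
  fun _ ⟨hf, K, hK, hv⟩ => ⟨hf, K, hK.trans h, hv⟩

theorem dvdAll_succ_of_mem_Qgt (hnu : IsNormalization π Qall nu) {N : ℕ} {g : TateAlgebra n R π}
    (hg : g ∈ Qgt π Qall N) : DvdAll π (N + 1) (g : MvPowerSeries (Fin n) R) := by
  rcases eq_or_ne g 0 with rfl | hg0
  · intro i; simp
  obtain ⟨M, hM, -⟩ := hnu g hg.1 hg0
  exact hM.1.of_le (not_le.mp fun h => hg.2 ⟨M, h, hM⟩)

theorem Qgt_subset_piPowMulSet_union_Qgt_succ (hnu : IsNormalization π Qall nu) (N : ℕ) :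
    Qgt π Qall N ⊆ piPowMulSet π (N + 1) (nu '' Qle π Qall (N + 1)) ∪ Qgt π Qall (N + 1) := by
  intro g hg
  by_cases hle : ∃ M ≤ N + 1, ValEq π (g : MvPowerSeries (Fin n) R) M
  · obtain ⟨M, hM, hgM⟩ := hle
    obtain ⟨K, hgK, hgnu⟩ := hnu g hg.1 (ne_of_apply_ne _ hgM.ne_zero)
    obtain rfl := hgK.unique hgM
    obtain rfl : K = N + 1 := le_antisymm hM (not_le.mp fun h => hg.2 ⟨K, h, hgK⟩)
    exact Or.inl ⟨nu g, ⟨g, ⟨hg.1, N + 1, le_rfl, hgK⟩, rfl⟩,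
      Subtype.ext ((coe_monTA_mul _ _).trans hgnu.symm)⟩
  · exact Or.inr ⟨hg.1, hle⟩

theorem monTA_mul_nu_mem_of_mem_Qle {I : Ideal (TateAlgebra n R π)} (hQI : ∀ f ∈ Qall, f ∈ I)
    (hnu : IsNormalization π Qall nu) {N : ℕ} {f : TateAlgebra n R π}
    (hf : f ∈ Qle π Qall N) : monTA π (N, 0) * nu f ∈ I := by
  obtain ⟨hfQ, M, hMN, hfM⟩ := hf
  obtain ⟨K, hfK, hfnu⟩ := hnu f hfQ (ne_of_apply_ne _ hfM.ne_zero)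
  obtain rfl := hfK.unique hfM
  have hpow : monTA π (N, 0) * nu f = monTA π (N - K, 0) * f := by
    apply Subtype.ext
    rw [coe_monTA_mul, coe_monTA_mul, hfnu, smul_smul, ← pow_add, Nat.sub_add_cancel hMN]
  rw [hpow]
  exact I.mul_mem_left _ (hQI f hfQ)

theorem span_piPowMulSet_union_Qgt_le {I : Ideal (TateAlgebra n R π)}
    (hQI : ∀ f ∈ Qall, f ∈ I) (hnu : IsNormalization π Qall nu) (N : ℕ) :
    Ideal.span (piPowMulSet π N (nu '' Qle π Qall N) ∪ Qgt π Qall N) ≤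
      I ⊓ dvdAllIdeal π N := by
  refine Ideal.span_le.mpr (Set.union_subset ?_ fun g hg => ⟨hQI g hg.1, ?_⟩)
  · rintro _ ⟨_, ⟨f, hf, rfl⟩, rfl⟩
    exact ⟨monTA_mul_nu_mem_of_mem_Qle hQI hnu hf, monTA_mul_mem_dvdAllIdeal N _⟩
  · exact (dvdAll_succ_of_mem_Qgt hnu hg).of_le N.le_succ

end TateAlgebra

/-- Proposition, (b) at level `N` and (c) at level `N-1` imply (c) at
level `N`: if `φ_N(S_N) ⊆ ⟨π·ν(Q_{≤N}), π^{-N} Q_{>N}⟩` and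
`I_N = ⟨π^N ν(Q_{≤N}), Q_{>N}⟩`, then `I_{N+1} = ⟨π^{N+1} ν(Q_{≤N+1}), Q_{>N+1}⟩`. -/
theorem statement_16 (π : O) (hπ : Irreducible π)
    (I : Ideal (TateAlgebra n O π)) (Qall : Set (TateAlgebra n O π))
    (hQI : ∀ f ∈ Qall, f ∈ I)
    (nu : TateAlgebra n O π → TateAlgebra n O π)
    (hnu : ∀ f ∈ Qall, f ≠ 0 → ∃ N : ℕ, ValEq π (f : MvPowerSeries (Fin n) O) N ∧
      (f : MvPowerSeries (Fin n) O) = (π ^ N) • ((nu f : TateAlgebra n O π) :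
        MvPowerSeries (Fin n) O))
    (N : ℕ)
    -- (b) at level N : `φ_N(S_N) ⊆ ⟨π·ν(Q_{≤N}), π^{-N} Q_{>N}⟩`
    (hb : ∀ s : Finset (TateAlgebra n O π), ↑s ⊆ Qle π Qall N →
      ∀ a : TateAlgebra n O π → TateAlgebra n O π,
        DvdAll π 1 ((∑ f ∈ s, a f * nu f : TateAlgebra n O π) : MvPowerSeries (Fin n) O) →
        (∑ f ∈ s, a f * nu f) ∈
          Ideal.span (piPowMulSet π 1 (nu '' Qle π Qall N) ∪ piPowDivSet π N (Qgt π Qall N)))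
    -- (c) at level N-1 : `I_N = ⟨π^N ν(Q_{≤N}), Q_{>N}⟩`
    (hc : {h : TateAlgebra n O π | h ∈ I ∧ DvdAll π N (h : MvPowerSeries (Fin n) O)} =
      ((Ideal.span (piPowMulSet π N (nu '' Qle π Qall N) ∪ Qgt π Qall N) :
        Ideal (TateAlgebra n O π)) : Set (TateAlgebra n O π))) :
    -- (c) at level N : `I_{N+1} = ⟨π^{N+1} ν(Q_{≤N+1}), Q_{>N+1}⟩`
    {h : TateAlgebra n O π | h ∈ I ∧ DvdAll π (N + 1) (h : MvPowerSeries (Fin n) O)} =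
      ((Ideal.span (piPowMulSet π (N + 1) (nu '' Qle π Qall (N + 1)) ∪ Qgt π Qall (N + 1)) :
        Ideal (TateAlgebra n O π)) : Set (TateAlgebra n O π)) := by
  set J := Ideal.span (piPowMulSet π (N + 1) (nu '' Qle π Qall (N + 1)) ∪ Qgt π Qall (N + 1))
  have hQgtJ : Qgt π Qall N ⊆ J :=
    (Qgt_subset_piPowMulSet_union_Qgt_succ hnu N).trans Ideal.subset_span
  have hlevel : Ideal.span (piPowMulSet π (N + 1) (nu '' Qle π Qall N) ∪ Qgt π Qall N) ≤ J :=
    Ideal.span_le.mpr <| Set.union_subset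
      (Set.Subset.trans (Set.image_mono (Set.image_mono (Qle_mono N.le_succ)))
        (Set.subset_union_left.trans Ideal.subset_span)) hQgtJ
  ext x
  refine ⟨fun ⟨hxI, hxD⟩ => ?_, fun hx => span_piPowMulSet_union_Qgt_le hQI hnu (N + 1) hx⟩
  have hxN : x ∈ Ideal.span (piPowMulSet π N (nu '' Qle π Qall N) ∪ Qgt π Qall N) := by
    rw [← SetLike.mem_coe, ← hc]
    exact ⟨hxI, hxD.of_le N.le_succ⟩
  refine mem_of_mem_span_mul_image_union (D := dvdAllIdeal π (N + 1))
    (fun g hg => dvdAll_succ_of_mem_Qgt hnu hg) hQgtJ ?_ hxN hxD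
  intro y hy hyD
  obtain ⟨s, hs, a, rfl⟩ := exists_finset_sum_mul_eq_of_mem_span_image hy
  rw [mem_dvdAllIdeal, coe_monTA_mul] at hyD
  exact hlevel (monTA_mul_mem_span_of_mem_span_piPowMulSet_union_piPowDivSet
    (hb s hs a (dvdAll_of_dvdAll_pow_smul hπ.ne_zero hyD)))
end
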